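/- Characterization of the values of type ♯𝔹⇒♯𝔹: a unitary distribution of closed abstractions (Σᵢ₌₁ⁿ αᵢ·λx.t⃗ᵢ) ∈ S is a value of type ♯𝔹⇒♯𝔹 (i.e., belongs to ⟦♯𝔹⇒♯𝔹⟧) if and only if it represents a unitary operator F : ℂ² → ℂ². -/

import Mathlib

namespace LinAlg

/-! ### Syntax: pure values, pure terms, term distributions -/

mutual
inductive Val : Type where
  | var : ℕ → Val
  | lam : ℕ → Distr → Val
  | star : Val
  | pair : Val → Val → Val
  | inl : Val → Val
  | inr : Val → Val
inductive Term : Type where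
  | val : Val → Term
  | app : Term → Term → Term
  | seq : Term → Distr → Term
  | letp : ℕ → ℕ → Term → Distr → Term
  | matc : Term → ℕ → Distr → ℕ → Distr → Term
inductive Distr : Type where
  | zero : Distr
  | single : Term → Distr
  | add : Distr → Distr → Distr
  | smul : ℂ → Distr → Distr
end

noncomputable instance : DecidableEq Val := fun _ _ => Classical.dec _
noncomputable instance : DecidableEq Term := fun _ _ => Classical.dec _
noncomputable instance : DecidableEq Distr := fun _ _ => Classical.dec _

/-! ### The shallow congruence ≡ on term distributions -/

inductive Cong : Distr → Distr → Prop where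
  | addZero (d : Distr) : Cong (d.add .zero) d
  | oneSmul (d : Distr) : Cong (Distr.smul 1 d) d
  | smulSmul (a b : ℂ) (d : Distr) : Cong (Distr.smul a (Distr.smul b d)) (Distr.smul (a * b) d)
  | addComm (d₁ d₂ : Distr) : Cong (d₁.add d₂) (d₂.add d₁)
  | addAssoc (d₁ d₂ d₃ : Distr) : Cong ((d₁.add d₂).add d₃) (d₁.add (d₂.add d₃))
  | smulDistrib (a b : ℂ) (d : Distr) : Cong (Distr.smul (a + b) d) ((Distr.smul a d).add (Distr.smul b d))
  | smulAdd (a : ℂ) (d₁ d₂ : Distr) : Cong (Distr.smul a (d₁.add d₂)) ((Distr.smul a d₁).add (Distr.smul a d₂))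
  | refl (d : Distr) : Cong d d
  | symm {d₁ d₂ : Distr} : Cong d₁ d₂ → Cong d₂ d₁
  | trans {d₁ d₂ d₃ : Distr} : Cong d₁ d₂ → Cong d₂ d₃ → Cong d₁ d₃
  | addCongr {d₁ d₁' d₂ d₂' : Distr} : Cong d₁ d₁' → Cong d₂ d₂' → Cong (d₁.add d₂) (d₁'.add d₂')
  | smulCongr (a : ℂ) {d d' : Distr} : Cong d d' → Cong (Distr.smul a d) (Distr.smul a d')

/-! ### Free variables -/

mutual
def fvV : Val → Finset ℕ
  | .var y => {y}
  | .lam y b => fvD b \ {y}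
  | .star => ∅
  | .pair v₁ v₂ => fvV v₁ ∪ fvV v₂
  | .inl v => fvV v
  | .inr v => fvV v
def fvT : Term → Finset ℕ
  | .val v => fvV v
  | .app s t => fvT s ∪ fvT t
  | .seq t s => fvT t ∪ fvD s
  | .letp y z t s => fvT t ∪ (fvD s \ {y, z})
  | .matc t y s₁ z s₂ => fvT t ∪ (fvD s₁ \ {y}) ∪ (fvD s₂ \ {z})
def fvD : Distr → Finset ℕ
  | .zero => ∅
  | .single t => fvT t
  | .add d₁ d₂ => fvD d₁ ∪ fvD d₂
  | .smul _ d => fvD d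
end

/-! ### Pure substitution -/

mutual
def substV (x : ℕ) (w : Val) : Val → Val
  | .var y => if y = x then w else .var y
  | .lam y b => if y = x then .lam y b else .lam y (substD x w b)
  | .star => .star
  | .pair v₁ v₂ => .pair (substV x w v₁) (substV x w v₂)
  | .inl v => .inl (substV x w v)
  | .inr v => .inr (substV x w v)
def substT (x : ℕ) (w : Val) : Term → Term
  | .val v => .val (substV x w v)
  | .app s t => .app (substT x w s) (substT x w t)
  | .seq t s => .seq (substT x w t) (substD x w s)
  | .letp y z t s =>
      .letp y z (substT x w t) (if y = x ∨ z = x then s else substD x w s)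
  | .matc t y s₁ z s₂ =>
      .matc (substT x w t) y (if y = x then s₁ else substD x w s₁)
        z (if z = x then s₂ else substD x w s₂)
def substD (x : ℕ) (w : Val) : Distr → Distr
  | .zero => .zero
  | .single t => .single (substT x w t)
  | .add d₁ d₂ => .add (substD x w d₁) (substD x w d₂)
  | .smul a d => .smul a (substD x w d)
end

/-! ### Linear extensions of the syntactic constructs -/

def appTD (s : Term) : Distr → Distr
  | .zero => .zero
  | .single t => .single (.app s t)
  | .add d₁ d₂ => .add (appTD s d₁) (appTD s d₂)
  | .smul a d => .smul a (appTD s d)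

def appDV : Distr → Val → Distr
  | .zero, _ => .zero
  | .single t, v => .single (.app t (.val v))
  | .add d₁ d₂, v => .add (appDV d₁ v) (appDV d₂ v)
  | .smul a d, v => .smul a (appDV d v)

def seqD : Distr → Distr → Distr
  | .zero, _ => .zero
  | .single t, s => .single (.seq t s)
  | .add d₁ d₂, s => .add (seqD d₁ s) (seqD d₂ s)
  | .smul a d, s => .smul a (seqD d s)

def letpD (x y : ℕ) : Distr → Distr → Distr
  | .zero, _ => .zero
  | .single t, s => .single (.letp x y t s)
  | .add d₁ d₂, s => .add (letpD x y d₁ s) (letpD x y d₂ s)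
  | .smul a d, s => .smul a (letpD x y d s)

def matcD : Distr → ℕ → Distr → ℕ → Distr → Distr
  | .zero, _, _, _, _ => .zero
  | .single t, y, s₁, z, s₂ => .single (.matc t y s₁ z s₂)
  | .add d₁ d₂, y, s₁, z, s₂ => .add (matcD d₁ y s₁ z s₂) (matcD d₂ y s₁ z s₂)
  | .smul a d, y, s₁, z, s₂ => .smul a (matcD d y s₁ z s₂)

/-- Bilinear application of distributions:  (Σᵢ αᵢ·tᵢ)(Σⱼ βⱼ·sⱼ) = Σᵢⱼ αᵢβⱼ·(tᵢ sⱼ). -/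
def appD : Distr → Distr → Distr
  | .zero, _ => .zero
  | .single t, w => appTD t w
  | .add d₁ d₂, w => .add (appD d₁ w) (appD d₂ w)
  | .smul a d, w => .smul a (appD d w)

/-- Bilinear substitution  d⟨x := w⃗⟩ = Σⱼ βⱼ · d[x := wⱼ]  (recursion on the value
distribution w⃗; non-value summands are junk and are sent to 0⃗). -/
def bsubst (x : ℕ) (d : Distr) : Distr → Distr
  | .zero => .zero
  | .single (.val w) => substD x w d
  | .single _ => .zero
  | .add w₁ w₂ => .add (bsubst x d w₁) (bsubst x d w₂)
  | .smul a w => .smul a (bsubst x d w)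

/-! ### Evaluation -/

inductive Atom : Term → Distr → Prop where
  | beta (x : ℕ) (b : Distr) (v : Val) :
      Atom (.app (.val (.lam x b)) (.val v)) (substD x v b)
  | seqStar (s : Distr) : Atom (.seq (.val .star) s) s
  | letPair (x y : ℕ) (v w : Val) (s : Distr) :
      Atom (.letp x y (.val (.pair v w)) s) (substD y w (substD x v s))
  | matchInl (v : Val) (y : ℕ) (s₁ : Distr) (z : ℕ) (s₂ : Distr) :
      Atom (.matc (.val (.inl v)) y s₁ z s₂) (substD y v s₁)
  | matchInr (v : Val) (y : ℕ) (s₁ : Distr) (z : ℕ) (s₂ : Distr) :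
      Atom (.matc (.val (.inr v)) y s₁ z s₂) (substD z v s₂)
  | appR (s : Term) {t : Term} {d : Distr} : Atom t d → Atom (.app s t) (appTD s d)
  | appL (v : Val) {t : Term} {d : Distr} : Atom t d → Atom (.app t (.val v)) (appDV d v)
  | seqC (s : Distr) {t : Term} {d : Distr} : Atom t d → Atom (.seq t s) (seqD d s)
  | letC (x y : ℕ) (s : Distr) {t : Term} {d : Distr} :
      Atom t d → Atom (.letp x y t s) (letpD x y d s)
  | matcC (y : ℕ) (s₁ : Distr) (z : ℕ) (s₂ : Distr) {t : Term} {d : Distr} :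
      Atom t d → Atom (.matc t y s₁ z s₂) (matcD d y s₁ z s₂)

/-- One-step evaluation:  t⃗ ≻ t⃗′. -/
def Step (d d' : Distr) : Prop :=
  ∃ (a : ℂ) (s : Term) (s' r : Distr),
    Cong d (Distr.add (.smul a (.single s)) r) ∧
    Cong d' (Distr.add (.smul a s') r) ∧ Atom s s'

/-- Evaluation  t⃗ ≻≻ t⃗′:  reflexive-transitive closure of one-step evaluation. -/
def Eval : Distr → Distr → Prop := Relation.ReflTransGen Step

/-! ### Value distributions, inner product, norm -/

def IsValT : Term → Prop
  | .val _ => True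
  | _ => False

def IsValD : Distr → Prop
  | .zero => True
  | .single t => IsValT t
  | .add d₁ d₂ => IsValD d₁ ∧ IsValD d₂
  | .smul _ d => IsValD d

/-- The set of closed value distributions. -/
def ClosedValD : Set Distr := {d | IsValD d ∧ fvD d = ∅}

/-- Total coefficient of the pure term `t` in the distribution `d`. -/
noncomputable def coeff : Distr → Term → ℂ
  | .zero, _ => 0
  | .single s, t => if s = t then 1 else 0
  | .add d₁ d₂, t => coeff d₁ t + coeff d₂ t
  | .smul a d, t => a * coeff d t

/-- The domain of a distribution (all pure terms occurring in it, even with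
coefficient 0). -/
noncomputable def domD : Distr → Finset Term
  | .zero => ∅
  | .single t => {t}
  | .add d₁ d₂ => domD d₁ ∪ domD d₂
  | .smul _ d => domD d

/-- The inner product ⟨v⃗|w⃗⟩ on value distributions. -/
noncomputable def innerD (v w : Distr) : ℂ :=
  ∑ t ∈ domD v, (starRingEnd ℂ) (coeff v t) * coeff w t

/-- The pseudo-ℓ²-norm ‖v⃗‖. -/
noncomputable def normD (v : Distr) : ℝ := Real.sqrt (innerD v v).re

/-- The unit sphere S of closed value distributions of norm 1. -/
def Sphere : Set Distr := {d | d ∈ ClosedValD ∧ normD d = 1}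

/-- Span(X): weak linear combinations of elements of X (taken modulo ≡). -/
inductive Span (X : Set Distr) : Distr → Prop where
  | mem {d : Distr} : d ∈ X → Span X d
  | zero : Span X .zero
  | add {d₁ d₂ : Distr} : Span X d₁ → Span X d₂ → Span X (d₁.add d₂)
  | smul (a : ℂ) {d : Distr} : Span X d → Span X (Distr.smul a d)
  | congr {d d' : Distr} : Span X d → Cong d d' → Span X d'

/-! ### Realizability: unitary types -/

/-- t⃗ ⊩ A :  t⃗ evaluates to some vector of ⟦A⟧. -/
def Realizes (A : Set Distr) (t : Distr) : Prop := ∃ v ∈ A, Eval t v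

/-- |A| : the set of (closed) realizers of A. -/
def realizersOf (A : Set Distr) : Set Distr := {t | fvD t = ∅ ∧ Realizes A t}

/-! ### Type constructors -/

def UnitT : Set Distr := {Distr.single (.val .star)}

/-- ♭A : the basis of A. -/
def flatT (X : Set Distr) : Set Distr :=
  {e | ∃ d ∈ X, ∃ v : Val, (Term.val v) ∈ domD d ∧ e = Distr.single (.val v)}

/-- ♯A : the unitary span of A. -/
def sharpT (X : Set Distr) : Set Distr := {d | Span X d ∧ d ∈ Sphere}

/-- Linear extension of a value constructor. -/
def mapVD (f : Val → Val) : Distr → Distr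
  | .zero => .zero
  | .single (.val v) => .single (.val (f v))
  | .single t => .single t
  | .add d₁ d₂ => .add (mapVD f d₁) (mapVD f d₂)
  | .smul a d => .smul a (mapVD f d)

def inlD : Distr → Distr := mapVD Val.inl
def inrD : Distr → Distr := mapVD Val.inr

/-- Bilinear extension of pairing. -/
def pairD : Distr → Distr → Distr
  | .zero, _ => .zero
  | .single (.val v), w => mapVD (Val.pair v) w
  | .single t, _ => .single t
  | .add d₁ d₂, w => .add (pairD d₁ w) (pairD d₂ w)
  | .smul a d, w => .smul a (pairD d w)

/-- A + B (simple sum). -/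
def plusT (A B : Set Distr) : Set Distr :=
  {d | (∃ v ∈ A, d = inlD v) ∨ (∃ w ∈ B, d = inrD w)}

/-- A × B (simple product). -/
def timesT (A B : Set Distr) : Set Distr :=
  {d | ∃ v ∈ A, ∃ w ∈ B, d = pairD v w}

/-- A → B (pure arrow). -/
def arrowT (A B : Set Distr) : Set Distr :=
  {d | ∃ (x : ℕ) (b : Distr), d = Distr.single (.val (.lam x b)) ∧ fvD d = ∅ ∧
      ∀ v ∈ A, Realizes B (bsubst x b v)}

/-- Σᵢ αᵢ · λx.t⃗ᵢ  ↦  Σᵢ αᵢ · t⃗ᵢ  (strips the λx in front of each summand). -/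
def stripLam (x : ℕ) : Distr → Distr
  | .zero => .zero
  | .single (.val (.lam y b)) => if y = x then b else .single (.val (.lam y b))
  | .single t => .single t
  | .add d₁ d₂ => .add (stripLam x d₁) (stripLam x d₂)
  | .smul a d => .smul a (stripLam x d)

/-- A ⇒ B (unitary arrow). -/
def uarrowT (A B : Set Distr) : Set Distr :=
  {d | d ∈ Sphere ∧ ∃ x : ℕ,
      (∀ t ∈ domD d, ∃ b : Distr, t = Term.val (.lam x b)) ∧
      ∀ v ∈ A, Realizes B (bsubst x (stripLam x d) v)}

/-! ### Booleans -/

def ttD : Distr := .single (.val (.inl .star))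
def ffD : Distr := .single (.val (.inr .star))

/-- 𝔹 = 𝕌 + 𝕌. -/
def BoolT : Set Distr := plusT UnitT UnitT

/-- ♯𝔹, the type of unitary Booleans. -/
def sharpBool : Set Distr := sharpT BoolT

/-- Boolean projection π : Span({tt,ff}) → ℂ². -/
noncomputable def piB (d : Distr) : ℂ × ℂ :=
  (coeff d (.val (.inl .star)), coeff d (.val (.inr .star)))

/-- t⃗ represents the operator F : ℂ² → ℂ². -/
def Represents (td : Distr) (F : ℂ × ℂ → ℂ × ℂ) : Prop :=
  ∀ v, Span BoolT v → ∃ w, Span BoolT w ∧ Eval (appD td v) w ∧ piB w = F (piB v)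

/-- Hermitian inner product on ℂ². -/
def hinner (u v : ℂ × ℂ) : ℂ :=
  (starRingEnd ℂ) u.1 * v.1 + (starRingEnd ℂ) u.2 * v.2

/-- A unitary operator on ℂ². -/
def IsUnitaryOp (F : ℂ × ℂ → ℂ × ℂ) : Prop :=
  ∀ u v : ℂ × ℂ, hinner (F u) (F v) = hinner u v

/-! ### Typing contexts, substitutions, judgments -/

abbrev Ctx := List (ℕ × Set Distr)
abbrev Subst := List (ℕ × Distr)

/-- Applying a substitution, one bilinear substitution at a time. -/
def applySub : Distr → Subst → Distr
  | d, [] => d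
  | d, (x, w) :: σ => applySub (bsubst x d w) σ

/-- σ ∈ ⟦Γ⟧. -/
def SubMem (σ : Subst) (Γ : Ctx) : Prop :=
  List.Forall₂ (fun p q => p.1 = q.1 ∧ p.2 ∈ q.2) σ Γ

def ctxDom (Γ : Ctx) : Set ℕ := {x | ∃ A, (x, A) ∈ Γ}

/-- dom♯(Γ): the variables of Γ whose type is not a pure-value type. -/
def ctxDomSharp (Γ : Ctx) : Set ℕ := {x | ∃ A, (x, A) ∈ Γ ∧ flatT A ≠ A}

/-- All the types of the context are unitary types (subsets of the sphere). -/
def CtxUnitary (Γ : Ctx) : Prop := ∀ p ∈ Γ, p.2 ⊆ Sphere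

/-- Validity of the typing judgment  Γ ⊢ t⃗ : A. -/
def ValidJ (Γ : Ctx) (t : Distr) (A : Set Distr) : Prop :=
  ctxDomSharp Γ ⊆ (fvD t : Set ℕ) ∧ (fvD t : Set ℕ) ⊆ ctxDom Γ ∧
  ∀ σ : Subst, SubMem σ Γ → Realizes A (applySub t σ)

/-- Validity of the orthogonality judgment  Γ | Δ₁ ⊢ t⃗₁ ⊥ Δ₂ ⊢ t⃗₂ : A. -/
def OrthoJ (Γ Δ₁ Δ₂ : Ctx) (t₁ t₂ : Distr) (A : Set Distr) : Prop :=
  ValidJ (Γ ++ Δ₁) t₁ A ∧ ValidJ (Γ ++ Δ₂) t₂ A ∧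
  ∀ σ σ₁ σ₂ : Subst, SubMem σ Γ → SubMem σ₁ Δ₁ → SubMem σ₂ Δ₂ →
    ∀ v₁ v₂ : Distr, v₁ ∈ ClosedValD → v₂ ∈ ClosedValD →
      Eval (applySub t₁ (σ ++ σ₁)) v₁ → Eval (applySub t₂ (σ ++ σ₂)) v₂ →
      innerD v₁ v₂ = 0

end LinAlg

/-!
Evaluation is confluent up to `≡`: two steps either contract different pure terms, each of
which survives the other step, or the same pure term, in which case one step can be completed
into the other by contracting the difference of the two amounts. Hence a term distribution
evaluates to at most one value distribution up to `≡`.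

Application and bilinear substitution are linear, and evaluation is compatible with `+` and
scalar multiplication, so the results `w₁`, `w₂` of the body on `tt` and `ff` determine its
result on every Boolean distribution `v`: its projection is `F (π v)` for the linear map `F`
with columns `π w₁` and `π w₂`. If the abstraction has type `♯𝔹 ⇒ ♯𝔹`, then `F` maps unit
vectors to unit vectors, which forces its columns to be orthonormal; conversely, a unitary
`F` maps the unit vectors of `♯𝔹` to unit vectors.
-/

namespace LinAlg

@[elab_as_elim]
theorem Distr.ind {P : Distr → Prop} (zero : P .zero) (single : ∀ t, P (.single t))
    (add : ∀ d₁ d₂, P d₁ → P d₂ → P (d₁.add d₂)) (smul : ∀ (a : ℂ) d, P d → P (.smul a d)) :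
    ∀ d, P d := by
  apply Distr.rec (motive_1 := fun _ => True) (motive_2 := fun _ => True) (motive_3 := P)
    <;> intros <;> first | trivial | apply_assumption <;> assumption

theorem coeff_eq_zero_of_notMem {d : Distr} {t : Term} (h : t ∉ domD d) : coeff d t = 0 := by
  induction d using Distr.ind with
  | zero => rfl
  | single s => simp_all [domD, coeff, eq_comm]
  | add d₁ d₂ ih₁ ih₂ => simp_all [domD, coeff]
  | smul a d ih => simp_all [domD, coeff]

theorem isValD_iff_forall_mem_domD {d : Distr} : IsValD d ↔ ∀ t ∈ domD d, IsValT t := by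
  induction d using Distr.ind with
  | zero => simp [IsValD, domD]
  | single s => simp [IsValD, domD]
  | add d₁ d₂ ih₁ ih₂ => simp [IsValD, domD, ih₁, ih₂, or_imp, forall_and]
  | smul a d ih => simp [IsValD, domD, ih]

theorem fvD_eq_biUnion_domD (d : Distr) : fvD d = (domD d).biUnion fvT := by
  induction d using Distr.ind with
  | zero => rfl
  | single s => simp [fvD, domD]
  | add d₁ d₂ ih₁ ih₂ => simp [fvD, domD, ih₁, ih₂, Finset.union_biUnion]
  | smul a d ih => simp [fvD, domD, ih]

/-! ### Congruence is determined by domains and coefficients -/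

instance : Trans Cong Cong Cong := ⟨Cong.trans⟩

namespace Cong

theorem domD_eq {d d' : Distr} (h : Cong d d') : domD d = domD d' := by
  induction h <;> simp_all [domD, Finset.union_comm, Finset.union_left_comm]

theorem coeff_eq {d d' : Distr} (h : Cong d d') (t : Term) : coeff d t = coeff d' t := by
  induction h <;> simp_all [coeff] <;> ring

theorem zero_add (d : Distr) : Cong (Distr.zero.add d) d :=
  (addComm _ _).trans (addZero d)

theorem smul_zero (a : ℂ) : Cong (Distr.smul a .zero) .zero := by
  have zero_smul_zero : Cong .zero (Distr.smul 0 .zero) :=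
    calc Cong .zero (Distr.smul (1 + 0) .zero) := by simpa using (oneSmul _).symm
      Cong _ _ := smulDistrib _ _ _
      Cong _ _ := addCongr (oneSmul _) (refl _)
      Cong _ _ := zero_add _
  calc Cong (Distr.smul a .zero) (Distr.smul a (Distr.smul 0 .zero)) := smulCongr a zero_smul_zero
    Cong _ _ := smulSmul _ _ _
    Cong _ _ := by rw [mul_zero]; exact zero_smul_zero.symm

theorem add_left_comm (d₁ d₂ d₃ : Distr) :
    Cong (d₁.add (d₂.add d₃)) (d₂.add (d₁.add d₃)) :=
  ((addAssoc _ _ _).symm.trans (addCongr (addComm _ _) (refl _))).trans (addAssoc _ _ _)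

theorem add_add_add_comm (d₁ d₂ d₃ d₄ : Distr) :
    Cong ((d₁.add d₂).add (d₃.add d₄)) ((d₁.add d₃).add (d₂.add d₄)) :=
  ((addAssoc _ _ _).trans (addCongr (refl _) (add_left_comm _ _ _))).trans (addAssoc _ _ _).symm

end Cong

theorem cong_zero_of_domD_eq_empty {d : Distr} (h : domD d = ∅) : Cong d .zero := by
  induction d using Distr.ind with
  | zero => exact .refl _
  | single t => simp [domD] at h
  | add d₁ d₂ ih₁ ih₂ =>
    obtain ⟨h₁, h₂⟩ := Finset.union_eq_empty.mp h
    exact (Cong.addCongr (ih₁ h₁) (ih₂ h₂)).trans (.addZero _)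
  | smul a d ih => exact (Cong.smulCongr a (ih h)).trans (Cong.smul_zero a)

theorem exists_cong_smul_single_add {d : Distr} {t : Term} (ht : t ∈ domD d) :
    ∃ r, Cong d ((Distr.smul (coeff d t) (.single t)).add r) ∧ domD r = (domD d).erase t := by
  induction d using Distr.ind with
  | zero => simp [domD] at ht
  | single s =>
    obtain rfl : t = s := by simpa [domD] using ht
    exact ⟨.zero, by simpa [coeff] using ((Cong.addZero _).trans (.oneSmul _)).symm,
      by simp [domD]⟩
  | add d₁ d₂ ih₁ ih₂ =>
    simp only [domD, Finset.mem_union] at ht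
    by_cases h₁ : t ∈ domD d₁ <;> by_cases h₂ : t ∈ domD d₂
    · obtain ⟨r₁, hd₁, hr₁⟩ := ih₁ h₁
      obtain ⟨r₂, hd₂, hr₂⟩ := ih₂ h₂
      refine ⟨r₁.add r₂, ?_, by simp [domD, hr₁, hr₂, Finset.erase_union_distrib]⟩
      calc Cong (d₁.add d₂) _ := Cong.addCongr hd₁ hd₂
        Cong _ _ := Cong.add_add_add_comm _ _ _ _
        Cong _ _ := Cong.addCongr (Cong.smulDistrib _ _ _).symm (.refl _)
    · obtain ⟨r₁, hd₁, hr₁⟩ := ih₁ h₁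
      refine ⟨r₁.add d₂, ?_, by simp [domD, hr₁, Finset.erase_union_distrib,
        Finset.erase_eq_of_notMem h₂]⟩
      simpa [coeff, coeff_eq_zero_of_notMem h₂] using
        (Cong.addCongr hd₁ (.refl d₂)).trans (.addAssoc _ _ _)
    · obtain ⟨r₂, hd₂, hr₂⟩ := ih₂ h₂
      refine ⟨d₁.add r₂, ?_, by simp [domD, hr₂, Finset.erase_union_distrib,
        Finset.erase_eq_of_notMem h₁]⟩
      simpa [coeff, coeff_eq_zero_of_notMem h₁] using
        (Cong.addCongr (.refl d₁) hd₂).trans (Cong.add_left_comm _ _ _)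
    · exact (ht.elim h₁ h₂).elim
  | smul a d ih =>
    obtain ⟨r, hd, hr⟩ := ih ht
    refine ⟨.smul a r, ?_, hr⟩
    calc Cong (Distr.smul a d) _ := Cong.smulCongr a hd
      Cong _ _ := Cong.smulAdd _ _ _
      Cong _ _ := Cong.addCongr (Cong.smulSmul _ _ _) (.refl _)

/-- The domains matter: `0 · t` and `0⃗` have the same coefficients but are not congruent. -/
theorem cong_of_domD_eq_of_coeff_eq {d d' : Distr} (hdom : domD d = domD d')
    (hcoeff : ∀ t, coeff d t = coeff d' t) : Cong d d' := by
  induction hcard : (domD d).card generalizing d d' with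
  | zero =>
    have hd : domD d = ∅ := Finset.card_eq_zero.mp hcard
    exact (cong_zero_of_domD_eq_empty hd).trans (cong_zero_of_domD_eq_empty (hdom ▸ hd)).symm
  | succ n ih =>
    obtain ⟨t, ht⟩ := Finset.card_pos.mp (by rw [hcard]; omega)
    obtain ⟨r, hd, hr⟩ := exists_cong_smul_single_add ht
    obtain ⟨r', hd', hr'⟩ := exists_cong_smul_single_add (hdom ▸ ht)
    have hrr' : Cong r r' := by
      refine ih (by rw [hr, hr', hdom]) (fun s => ?_)
        (by rw [hr, Finset.card_erase_of_mem ht, hcard]; rfl)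
      have hs := hd.coeff_eq s
      have hs' := hd'.coeff_eq s
      simp only [coeff] at hs hs'
      linear_combination hs' - hs + hcoeff s - (if t = s then 1 else 0) * hcoeff t
    calc Cong d _ := hd
      Cong _ _ := by rw [hcoeff t]; exact Cong.addCongr (.refl _) hrr'
      Cong _ d' := hd'.symm

theorem exists_domD_eq_coeff_eq (S : Finset Term) (f : Term → ℂ) :
    ∃ r, domD r = S ∧ ∀ t, coeff r t = if t ∈ S then f t else 0 := by
  induction S using Finset.induction_on with
  | empty => exact ⟨.zero, rfl, fun t => by simp [coeff]⟩
  | insert t S ht ih =>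
    obtain ⟨r, hr, hc⟩ := ih
    refine ⟨(Distr.smul (f t) (.single t)).add r, by simp [domD, hr],
      fun s => ?_⟩
    by_cases hs : s = t
    · subst hs; simp [coeff, hc, ht]
    · simp [coeff, hc, hs, Ne.symm hs]

/-! ### Confluence -/

theorem Atom.not_val {v : Val} {d : Distr} : ¬ Atom (.val v) d := nofun

theorem Atom.det {s : Term} {ρ₁ ρ₂ : Distr} (h₁ : Atom s ρ₁) (h₂ : Atom s ρ₂) : ρ₁ = ρ₂ := by
  induction h₁ generalizing ρ₂ <;> cases h₂ <;>
    first | rfl | (exfalso; apply Atom.not_val; assumption) | (congr 1; solve_by_elim)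

theorem Step.of_cong_left {d d' e : Distr} (h : Cong d d') (hs : Step d' e) : Step d e :=
  let ⟨a, s, ρ, r, h₁, h₂, hA⟩ := hs
  ⟨a, s, ρ, r, h.trans h₁, h₂, hA⟩

theorem Step.of_cong_right {d e e' : Distr} (hs : Step d e) (h : Cong e e') : Step d e' :=
  let ⟨a, s, ρ, r, h₁, h₂, hA⟩ := hs
  ⟨a, s, ρ, r, h₁, h.symm.trans h₂, hA⟩

theorem not_step_of_isValD {d e : Distr} (hd : IsValD d) : ¬ Step d e := by
  rintro ⟨a, s, ρ, r, h, -, hA⟩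
  have hs := isValD_iff_forall_mem_domD.mp hd s (by simp [h.domD_eq, domD])
  cases hA <;> simp [IsValT] at hs

theorem eq_of_eval_of_isValD {d e : Distr} (hd : IsValD d) (h : Eval d e) : e = d := by
  rcases Relation.ReflTransGen.cases_head h with h | ⟨c, hc, -⟩
  · exact h.symm
  · exact absurd hc (not_step_of_isValD hd)

theorem Cong.domD_coeff_of_smul_single_add {d r : Distr} {s : Term} {a : ℂ}
    (h : Cong d ((Distr.smul a (.single s)).add r)) :
    domD d = insert s (domD r) ∧ ∀ t, coeff d t = a * (if s = t then 1 else 0) + coeff r t :=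
  ⟨by simpa [domD] using h.domD_eq, fun t => by simpa [coeff] using h.coeff_eq t⟩

section Redex

variable {d r₁ r₂ : Distr} {s : Term} {a b : ℂ}

theorem cong_remainder_of_mem (h₁ : Cong d ((Distr.smul a (.single s)).add r₁))
    (h₂ : Cong d ((Distr.smul b (.single s)).add r₂)) (hs : s ∈ domD r₁) :
    Cong r₁ ((Distr.smul (b - a) (.single s)).add r₂) := by
  obtain ⟨hd₁, hc₁⟩ := h₁.domD_coeff_of_smul_single_add
  obtain ⟨hd₂, hc₂⟩ := h₂.domD_coeff_of_smul_single_add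
  refine cong_of_domD_eq_of_coeff_eq ?_ fun t => ?_
  · simp [domD, ← hd₂, hd₁, hs]
  · simp only [coeff]
    linear_combination hc₂ t - hc₁ t

theorem eq_and_cong_remainder_of_notMem (h₁ : Cong d ((Distr.smul a (.single s)).add r₁))
    (h₂ : Cong d ((Distr.smul b (.single s)).add r₂)) (hs₁ : s ∉ domD r₁)
    (hs₂ : s ∉ domD r₂) : a = b ∧ Cong r₁ r₂ := by
  obtain ⟨hd₁, hc₁⟩ := h₁.domD_coeff_of_smul_single_add
  obtain ⟨hd₂, hc₂⟩ := h₂.domD_coeff_of_smul_single_add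
  have hab : a = b := by
    simpa [coeff_eq_zero_of_notMem hs₁, coeff_eq_zero_of_notMem hs₂] using
      (hc₁ s).symm.trans (hc₂ s)
  subst hab
  refine ⟨rfl, cong_of_domD_eq_of_coeff_eq ?_ fun t => ?_⟩
  · rw [← Finset.erase_insert hs₁, ← Finset.erase_insert hs₂, ← hd₁, ← hd₂]
  · linear_combination hc₂ t - hc₁ t

theorem cong_remainder_of_ne {u : Term} (hsu : s ≠ u)
    (h₁ : Cong d ((Distr.smul a (.single s)).add r₁))
    (h₂ : Cong d ((Distr.smul b (.single u)).add r₂)) {r : Distr}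
    (hr : domD r = domD r₁ ∩ domD r₂) (hc : ∀ t, coeff r t = if t ∈ domD r₁ ∩ domD r₂ then
      coeff d t - a * (if s = t then 1 else 0) - b * (if u = t then 1 else 0) else 0) :
    Cong r₁ ((Distr.smul b (.single u)).add r) := by
  obtain ⟨hd₁, hc₁⟩ := h₁.domD_coeff_of_smul_single_add
  obtain ⟨hd₂, hc₂⟩ := h₂.domD_coeff_of_smul_single_add
  have mem₁ : ∀ t, t ∈ domD d ↔ t = s ∨ t ∈ domD r₁ := by simp [hd₁]
  have mem₂ : ∀ t, t ∈ domD d ↔ t = u ∨ t ∈ domD r₂ := by simp [hd₂]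
  have hu : u ∈ domD r₁ := ((mem₁ u).mp ((mem₂ u).mpr (.inl rfl))).resolve_left hsu.symm
  have hr₂ : ∀ t ∈ domD r₁, t ≠ u → t ∈ domD r₂ := fun t ht htu =>
    ((mem₂ t).mp ((mem₁ t).mpr (.inr ht))).resolve_left htu
  refine cong_of_domD_eq_of_coeff_eq ?_ fun t => ?_
  · ext t
    simp only [domD, hr, Finset.mem_union, Finset.mem_singleton, Finset.mem_inter]
    by_cases htu : t = u
    · simp [htu, hu]
    · have := hr₂ t
      tauto
  · simp only [coeff]
    rw [hc t]
    by_cases ht : t ∈ domD r₁ ∩ domD r₂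
    · rw [if_pos ht]
      linear_combination -hc₁ t
    · rw [if_neg ht]
      by_cases ht₁ : t ∈ domD r₁
      · obtain rfl : t = u := by_contra fun htu => ht (Finset.mem_inter.mpr ⟨ht₁, hr₂ t ht₁ htu⟩)
        have h₂t := coeff_eq_zero_of_notMem fun h => ht (Finset.mem_inter.mpr ⟨ht₁, h⟩)
        have e₁ := hc₁ t
        have e₂ := hc₂ t
        simp only [if_neg hsu] at e₁ e₂ ⊢
        linear_combination e₂ - e₁ + h₂t
      · rw [coeff_eq_zero_of_notMem ht₁, if_neg fun h : u = t => ht₁ (h ▸ hu)]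
        ring

theorem exists_common_remainder {u : Term} (hsu : s ≠ u)
    (h₁ : Cong d ((Distr.smul a (.single s)).add r₁))
    (h₂ : Cong d ((Distr.smul b (.single u)).add r₂)) :
    ∃ r, Cong r₁ ((Distr.smul b (.single u)).add r) ∧
      Cong r₂ ((Distr.smul a (.single s)).add r) := by
  obtain ⟨r, hr, hc⟩ := exists_domD_eq_coeff_eq (domD r₁ ∩ domD r₂) fun t =>
    coeff d t - a * (if s = t then 1 else 0) - b * (if u = t then 1 else 0)
  refine ⟨r, cong_remainder_of_ne hsu h₁ h₂ hr hc,
    cong_remainder_of_ne hsu.symm h₂ h₁ (by rw [hr, Finset.inter_comm]) fun t => ?_⟩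
  rw [hc, Finset.inter_comm, sub_right_comm]

theorem step_of_cong_remainder {d₁ d₂ ρ : Distr} (hA : Atom s ρ)
    (h₁ : Cong d₁ ((Distr.smul a ρ).add r₁)) (h₂ : Cong d₂ ((Distr.smul b ρ).add r₂))
    (hr : Cong r₁ ((Distr.smul (b - a) (.single s)).add r₂)) : Step d₁ d₂ := by
  refine ⟨b - a, s, ρ, (Distr.smul a ρ).add r₂,
    (h₁.trans (.addCongr (.refl _) hr)).trans (Cong.add_left_comm _ _ _), ?_, hA⟩
  calc Cong d₂ ((Distr.smul (b - a + a) ρ).add r₂) := by rwa [sub_add_cancel]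
    Cong _ _ := .addCongr (.smulDistrib _ _ _) (.refl _)
    Cong _ _ := .addAssoc _ _ _

end Redex

def StepOrCong (d e : Distr) : Prop := Step d e ∨ Cong d e

theorem Step.diamond {d d₁ d₂ : Distr} (h₁ : Step d d₁) (h₂ : Step d d₂) :
    ∃ e, StepOrCong d₁ e ∧ StepOrCong d₂ e := by
  obtain ⟨a, s, ρ, r₁, hd₁, hd₁', hA⟩ := h₁
  obtain ⟨b, u, σ, r₂, hd₂, hd₂', hB⟩ := h₂
  by_cases hsu : s = u
  · subst hsu
    obtain rfl := hA.det hB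
    by_cases hs₁ : s ∈ domD r₁
    · exact ⟨d₂, .inl (step_of_cong_remainder hA hd₁' hd₂' (cong_remainder_of_mem hd₁ hd₂ hs₁)),
        .inr (.refl _)⟩
    by_cases hs₂ : s ∈ domD r₂
    · exact ⟨d₁, .inr (.refl _),
        .inl (step_of_cong_remainder hA hd₂' hd₁' (cong_remainder_of_mem hd₂ hd₁ hs₂))⟩
    obtain ⟨rfl, hr⟩ := eq_and_cong_remainder_of_notMem hd₁ hd₂ hs₁ hs₂
    exact ⟨d₁, .inr (.refl _), .inr ((hd₂'.trans (.addCongr (.refl _) hr.symm)).trans hd₁'.symm)⟩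
  · obtain ⟨r, hr₁, hr₂⟩ := exists_common_remainder hsu hd₁ hd₂
    refine ⟨(Distr.smul a ρ).add ((Distr.smul b σ).add r),
      .inl ⟨b, u, σ, (Distr.smul a ρ).add r, ?_, Cong.add_left_comm _ _ _, hB⟩,
      .inl ⟨a, s, ρ, (Distr.smul b σ).add r, ?_, .refl _, hA⟩⟩
    · exact (hd₁'.trans (.addCongr (.refl _) hr₁)).trans (Cong.add_left_comm _ _ _)
    · exact (hd₂'.trans (.addCongr (.refl _) hr₂)).trans (Cong.add_left_comm _ _ _)

theorem StepOrCong.diamond {d d₁ d₂ : Distr} (h₁ : StepOrCong d d₁) (h₂ : StepOrCong d d₂) :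
    ∃ e, StepOrCong d₁ e ∧ StepOrCong d₂ e := by
  rcases h₁ with h₁ | h₁ <;> rcases h₂ with h₂ | h₂
  · exact h₁.diamond h₂
  · exact ⟨d₁, .inr (.refl _), .inl (h₁.of_cong_left h₂.symm)⟩
  · exact ⟨d₂, .inl (h₂.of_cong_left h₁.symm), .inr (.refl _)⟩
  · exact ⟨d₂, .inr (h₁.symm.trans h₂), .inr (.refl _)⟩

theorem exists_eval_cong_of_reflTransGen {d e : Distr}
    (h : Relation.ReflTransGen StepOrCong d e) : ∃ e', Eval d e' ∧ Cong e' e := by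
  induction h with
  | refl => exact ⟨d, .refl, .refl _⟩
  | tail _ hstep ih =>
    obtain ⟨e', hev, hc⟩ := ih
    rcases hstep with hstep | hcong
    · exact ⟨_, hev.tail (hstep.of_cong_left hc), .refl _⟩
    · exact ⟨e', hev, hc.trans hcong⟩

theorem eval_confluent {d e₁ e₂ : Distr} (h₁ : Eval d e₁) (h₂ : Eval d e₂) :
    ∃ f₁ f₂, Eval e₁ f₁ ∧ Eval e₂ f₂ ∧ Cong f₁ f₂ := by
  have toRTG {a b : Distr} : Eval a b → Relation.ReflTransGen StepOrCong a b :=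
    Relation.ReflTransGen.mono (fun _ _ => Or.inl) a b
  obtain ⟨g, hg₁, hg₂⟩ := Relation.church_rosser
    (fun _ _ _ hb hc => (hb.diamond hc).imp fun _ he => ⟨.single he.1, .single he.2⟩)
    (toRTG h₁) (toRTG h₂)
  obtain ⟨f₁, hf₁, hc₁⟩ := exists_eval_cong_of_reflTransGen hg₁
  obtain ⟨f₂, hf₂, hc₂⟩ := exists_eval_cong_of_reflTransGen hg₂
  exact ⟨f₁, f₂, hf₁, hf₂, hc₁.trans hc₂.symm⟩

theorem exists_eval_cong_of_eval_val {t w e : Distr} (hw : Eval t w) (hwv : IsValD w)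
    (he : Eval t e) : ∃ w', Eval e w' ∧ Cong w' w := by
  obtain ⟨f₁, f₂, hf₁, hf₂, hc⟩ := eval_confluent hw he
  obtain rfl := eq_of_eval_of_isValD hwv hf₁
  exact ⟨f₂, hf₂, hc.symm⟩

theorem cong_of_eval_val_of_eval_val {t w₁ w₂ : Distr} (h₁ : Eval t w₁) (hw₁ : IsValD w₁)
    (h₂ : Eval t w₂) (hw₂ : IsValD w₂) : Cong w₁ w₂ := by
  obtain ⟨w, hw, hc⟩ := exists_eval_cong_of_eval_val h₁ hw₁ h₂
  obtain rfl := eq_of_eval_of_isValD hw₂ hw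
  exact hc.symm

/-! ### Linearity of evaluation -/

theorem Step.add_left {d₁ e₁ : Distr} (h : Step d₁ e₁) (d₂ : Distr) :
    Step (d₁.add d₂) (e₁.add d₂) :=
  let ⟨a, s, ρ, r, h₁, h₂, hA⟩ := h
  ⟨a, s, ρ, r.add d₂, (Cong.addCongr h₁ (.refl _)).trans (.addAssoc _ _ _),
    (Cong.addCongr h₂ (.refl _)).trans (.addAssoc _ _ _), hA⟩

theorem Step.add_right (d₁ : Distr) {d₂ e₂ : Distr} (h : Step d₂ e₂) :
    Step (d₁.add d₂) (d₁.add e₂) :=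
  ((h.add_left d₁).of_cong_left (.addComm _ _)).of_cong_right (.addComm _ _)

theorem Step.smul (a : ℂ) {d e : Distr} (h : Step d e) : Step (.smul a d) (.smul a e) :=
  let ⟨b, s, ρ, r, h₁, h₂, hA⟩ := h
  ⟨a * b, s, ρ, .smul a r,
    ((Cong.smulCongr a h₁).trans (.smulAdd _ _ _)).trans (.addCongr (.smulSmul _ _ _) (.refl _)),
    ((Cong.smulCongr a h₂).trans (.smulAdd _ _ _)).trans (.addCongr (.smulSmul _ _ _) (.refl _)),
    hA⟩

theorem Eval.map {f : Distr → Distr} (hf : ∀ {d e}, Step d e → Step (f d) (f e)) {d e : Distr}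
    (h : Eval d e) : Eval (f d) (f e) :=
  Relation.ReflTransGen.lift f (fun _ _ => hf) _ _ h

theorem eval_add {d₁ e₁ d₂ e₂ : Distr} (h₁ : Eval d₁ e₁) (h₂ : Eval d₂ e₂) :
    Eval (d₁.add d₂) (e₁.add e₂) :=
  Relation.ReflTransGen.trans (h₁.map (·.add_left d₂)) (h₂.map (·.add_right e₁))

theorem eval_smul (a : ℂ) {d e : Distr} (h : Eval d e) : Eval (.smul a d) (.smul a e) :=
  h.map (·.smul a)

theorem exists_eval_cong_of_cong {d d' e : Distr} (hc : Cong d d') (h : Eval d e) :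
    ∃ e', Eval d' e' ∧ Cong e e' := by
  rcases Relation.ReflTransGen.cases_head h with rfl | ⟨c, hstep, hrest⟩
  · exact ⟨d', .refl, hc⟩
  · exact ⟨e, .head (hstep.of_cong_left hc.symm) hrest, .refl _⟩

theorem Cong.bsubst (x : ℕ) (B : Distr) {v v' : Distr} (h : Cong v v') :
    Cong (bsubst x B v) (bsubst x B v') := by
  induction h with
  | addZero => exact .addZero _
  | oneSmul => exact .oneSmul _
  | smulSmul => exact .smulSmul _ _ _
  | addComm => exact .addComm _ _
  | addAssoc => exact .addAssoc _ _ _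
  | smulDistrib => exact .smulDistrib _ _ _
  | smulAdd => exact .smulAdd _ _ _
  | refl => exact .refl _
  | symm _ ih => exact ih.symm
  | trans _ _ ih₁ ih₂ => exact ih₁.trans ih₂
  | addCongr _ _ ih₁ ih₂ => exact .addCongr ih₁ ih₂
  | smulCongr a _ ih => exact .smulCongr a ih

theorem bsubst_zero_cong (x : ℕ) (v : Distr) : Cong (bsubst x .zero v) .zero := by
  induction v using Distr.ind with
  | zero => exact .refl _
  | single t => cases t <;> exact .refl _
  | add v₁ v₂ ih₁ ih₂ => exact (Cong.addCongr ih₁ ih₂).trans (.addZero _)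
  | smul a v ih => exact (Cong.smulCongr a ih).trans (Cong.smul_zero a)

theorem bsubst_add_cong (x : ℕ) (B₁ B₂ v : Distr) :
    Cong (bsubst x (B₁.add B₂) v) ((bsubst x B₁ v).add (bsubst x B₂ v)) := by
  induction v using Distr.ind with
  | zero => exact (Cong.addZero _).symm
  | single t => cases t <;> first | exact .refl _ | exact (Cong.addZero _).symm
  | add v₁ v₂ ih₁ ih₂ => exact (Cong.addCongr ih₁ ih₂).trans (Cong.add_add_add_comm _ _ _ _)
  | smul a v ih => exact (Cong.smulCongr a ih).trans (.smulAdd _ _ _)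

theorem bsubst_smul_cong (x : ℕ) (a : ℂ) (B v : Distr) :
    Cong (bsubst x (.smul a B) v) (.smul a (bsubst x B v)) := by
  induction v using Distr.ind with
  | zero => exact (Cong.smul_zero a).symm
  | single t => cases t <;> first | exact .refl _ | exact (Cong.smul_zero a).symm
  | add v₁ v₂ ih₁ ih₂ => exact (Cong.addCongr ih₁ ih₂).trans (Cong.smulAdd _ _ _).symm
  | smul c v ih =>
    calc Cong (bsubst x (.smul a B) (.smul c v)) (.smul (c * a) (bsubst x B v)) :=
          (Cong.smulCongr c ih).trans (.smulSmul _ _ _)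
      Cong _ _ := by rw [mul_comm]; exact (Cong.smulSmul _ _ _).symm

theorem eval_appTD_lam (x : ℕ) (b : Distr) {v : Distr} (hv : IsValD v) :
    Eval (appTD (.val (.lam x b)) v) (bsubst x b v) := by
  induction v using Distr.ind with
  | zero => exact .refl
  | single t =>
    cases t <;> simp only [IsValD, IsValT] at hv
    exact .single ⟨1, _, _, .zero, ((Cong.addZero _).trans (.oneSmul _)).symm,
      ((Cong.addZero _).trans (.oneSmul _)).symm, .beta _ _ _⟩
  | add v₁ v₂ ih₁ ih₂ => exact eval_add (ih₁ hv.1) (ih₂ hv.2)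
  | smul a v ih => exact eval_smul a (ih hv)

theorem exists_eval_appD_cong_bsubst {d : Distr} {x : ℕ}
    (hlam : ∀ t ∈ domD d, ∃ b, t = Term.val (.lam x b)) {v : Distr} (hv : IsValD v) :
    ∃ e, Eval (appD d v) e ∧ Cong e (bsubst x (stripLam x d) v) := by
  induction d using Distr.ind with
  | zero => exact ⟨.zero, .refl, (bsubst_zero_cong x v).symm⟩
  | single t =>
    obtain ⟨b, rfl⟩ := hlam t (by simp [domD])
    exact ⟨bsubst x b v, eval_appTD_lam x b hv, by simpa [stripLam] using .refl _⟩
  | add d₁ d₂ ih₁ ih₂ =>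
    obtain ⟨e₁, hE₁, hc₁⟩ := ih₁ fun t ht => hlam t (Finset.mem_union_left _ ht)
    obtain ⟨e₂, hE₂, hc₂⟩ := ih₂ fun t ht => hlam t (Finset.mem_union_right _ ht)
    exact ⟨e₁.add e₂, eval_add hE₁ hE₂,
      (Cong.addCongr hc₁ hc₂).trans (bsubst_add_cong x _ _ v).symm⟩
  | smul a d ih =>
    obtain ⟨e, hE, hc⟩ := ih hlam
    exact ⟨.smul a e, eval_smul a hE, (Cong.smulCongr a hc).trans (bsubst_smul_cong x a _ v).symm⟩

theorem exists_eval_appD_of_eval_bsubst {d v w : Distr} {x : ℕ}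
    (hlam : ∀ t ∈ domD d, ∃ b, t = Term.val (.lam x b)) (hv : IsValD v)
    (h : Eval (bsubst x (stripLam x d) v) w) : ∃ w', Eval (appD d v) w' ∧ Cong w w' := by
  obtain ⟨e, he, hce⟩ := exists_eval_appD_cong_bsubst hlam hv
  obtain ⟨w', hw', hc⟩ := exists_eval_cong_of_cong hce.symm h
  exact ⟨w', he.trans hw', hc⟩

theorem exists_eval_bsubst_of_eval_appD {d v w : Distr} {x : ℕ}
    (hlam : ∀ t ∈ domD d, ∃ b, t = Term.val (.lam x b)) (hv : IsValD v)
    (h : Eval (appD d v) w) (hw : IsValD w) :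
    ∃ w', Eval (bsubst x (stripLam x d) v) w' ∧ Cong w w' := by
  obtain ⟨e, he, hce⟩ := exists_eval_appD_cong_bsubst hlam hv
  obtain ⟨w₁, hw₁, hc₁⟩ := exists_eval_cong_of_eval_val h hw he
  obtain ⟨w', hw', hc⟩ := exists_eval_cong_of_cong hce hw₁
  exact ⟨w', hw', hc₁.symm.trans hc⟩

/-! ### Boolean distributions -/

theorem mem_BoolT_iff {d : Distr} : d ∈ BoolT ↔ d = ttD ∨ d = ffD := by
  simp [BoolT, plusT, UnitT, inlD, inrD, mapVD, ttD, ffD]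

theorem domD_subset_of_span_boolT {v : Distr} (h : Span BoolT v) :
    domD v ⊆ {.val (.inl .star), .val (.inr .star)} := by
  induction h with
  | mem hd => rcases mem_BoolT_iff.mp hd with rfl | rfl <;> simp [ttD, ffD, domD]
  | zero => simp [domD]
  | add _ _ ih₁ ih₂ => exact Finset.union_subset ih₁ ih₂
  | smul _ _ ih => exact ih
  | congr _ hc ih => exact hc.domD_eq ▸ ih

theorem mem_closedValD_of_span_boolT {v : Distr} (h : Span BoolT v) : v ∈ ClosedValD := by
  have hv := domD_subset_of_span_boolT h
  refine ⟨isValD_iff_forall_mem_domD.mpr fun t ht => ?_, ?_⟩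
  · have ht := hv ht
    simp only [Finset.mem_insert, Finset.mem_singleton] at ht
    rcases ht with rfl | rfl <;> trivial
  · rw [fvD_eq_biUnion_domD, ← Finset.subset_empty]
    exact (Finset.biUnion_subset_biUnion_of_subset_left _ hv).trans (by simp [fvT, fvV])

theorem isValD_of_span_boolT {v : Distr} (h : Span BoolT v) : IsValD v :=
  (mem_closedValD_of_span_boolT h).1

theorem Cong.piB_eq {d d' : Distr} (h : Cong d d') : piB d = piB d' := by
  simp [piB, h.coeff_eq]

@[simp] theorem piB_zero : piB .zero = 0 := rfl

@[simp] theorem piB_add (d₁ d₂ : Distr) : piB (d₁.add d₂) = piB d₁ + piB d₂ := rfl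

@[simp] theorem piB_smul (a : ℂ) (d : Distr) : piB (.smul a d) = a • piB d := rfl

@[simp] theorem piB_ttD : piB ttD = (1, 0) := by simp [piB, ttD, coeff]

@[simp] theorem piB_ffD : piB ffD = (0, 1) := by simp [piB, ffD, coeff]

theorem hinner_self (p : ℂ × ℂ) :
    hinner p p = ((Complex.normSq p.1 + Complex.normSq p.2 : ℝ) : ℂ) := by
  simp [hinner, Complex.normSq_eq_conj_mul_self]

theorem innerD_self_eq_hinner {w : Distr}
    (hw : domD w ⊆ {.val (.inl .star), .val (.inr .star)}) :
    innerD w w = hinner (piB w) (piB w) := by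
  rw [innerD, Finset.sum_subset hw fun t _ ht => by rw [coeff_eq_zero_of_notMem ht, mul_zero],
    Finset.sum_pair (by simp)]
  rfl

theorem normD_eq_one_iff {w : Distr} (hw : domD w ⊆ {.val (.inl .star), .val (.inr .star)}) :
    normD w = 1 ↔ hinner (piB w) (piB w) = 1 := by
  rw [normD, innerD_self_eq_hinner hw, hinner_self, Complex.ofReal_re, Real.sqrt_eq_one]
  exact_mod_cast Iff.rfl

theorem mem_sharpBool_iff {v : Distr} :
    v ∈ sharpBool ↔ Span BoolT v ∧ hinner (piB v) (piB v) = 1 := by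
  refine ⟨fun ⟨hv, _, hn⟩ => ⟨hv, ?_⟩, fun ⟨hv, hn⟩ => ⟨hv, mem_closedValD_of_span_boolT hv, ?_⟩⟩
  · exact (normD_eq_one_iff (domD_subset_of_span_boolT hv)).mp hn
  · exact (normD_eq_one_iff (domD_subset_of_span_boolT hv)).mpr hn

theorem ttD_mem_sharpBool : ttD ∈ sharpBool :=
  mem_sharpBool_iff.mpr ⟨.mem (mem_BoolT_iff.mpr (.inl rfl)), by simp [hinner]⟩

theorem ffD_mem_sharpBool : ffD ∈ sharpBool :=
  mem_sharpBool_iff.mpr ⟨.mem (mem_BoolT_iff.mpr (.inr rfl)), by simp [hinner]⟩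

def boolD (p : ℂ × ℂ) : Distr := (Distr.smul p.1 ttD).add (.smul p.2 ffD)

@[simp] theorem piB_boolD (p : ℂ × ℂ) : piB (boolD p) = p := by
  ext <;> simp [boolD]

theorem span_boolT_boolD (p : ℂ × ℂ) : Span BoolT (boolD p) :=
  .add (.smul _ (.mem (mem_BoolT_iff.mpr (.inl rfl))))
    (.smul _ (.mem (mem_BoolT_iff.mpr (.inr rfl))))

theorem boolD_mem_sharpBool {p : ℂ × ℂ} (hp : hinner p p = 1) : boolD p ∈ sharpBool :=
  mem_sharpBool_iff.mpr ⟨span_boolT_boolD p, by rwa [piB_boolD]⟩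

/-! ### Unitary maps of `ℂ²` -/

def ofColumns (c₁ c₂ : ℂ × ℂ) : ℂ × ℂ →ₗ[ℂ] ℂ × ℂ :=
  (LinearMap.fst ℂ ℂ ℂ).smulRight c₁ + (LinearMap.snd ℂ ℂ ℂ).smulRight c₂

@[simp] theorem ofColumns_apply (c₁ c₂ p : ℂ × ℂ) : ofColumns c₁ c₂ p = p.1 • c₁ + p.2 • c₂ :=
  rfl

theorem hinner_ofColumns (c₁ c₂ p q : ℂ × ℂ) :
    hinner (ofColumns c₁ c₂ p) (ofColumns c₁ c₂ q) =
      starRingEnd ℂ p.1 * q.1 * hinner c₁ c₁ + starRingEnd ℂ p.1 * q.2 * hinner c₁ c₂ +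
      starRingEnd ℂ p.2 * q.1 * hinner c₂ c₁ + starRingEnd ℂ p.2 * q.2 * hinner c₂ c₂ := by
  simp only [hinner, ofColumns_apply, Prod.fst_add, Prod.snd_add, Prod.smul_fst, Prod.smul_snd,
    smul_eq_mul, map_add, map_mul]
  ring

theorem isUnitaryOp_ofColumns {c₁ c₂ : ℂ × ℂ}
    (h : ∀ p, hinner p p = 1 → hinner (ofColumns c₁ c₂ p) (ofColumns c₁ c₂ p) = 1) :
    IsUnitaryOp (ofColumns c₁ c₂) := by
  have h₁₁ := h (1, 0) (by simp [hinner])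
  have h₂₂ := h (0, 1) (by simp [hinner])
  have e₁ := h (3 / 5, 4 / 5) (by rw [hinner_self]; norm_num [Complex.normSq_div])
  have e₂ := h (3 / 5, 4 / 5 * .I) (by rw [hinner_self]; norm_num [Complex.normSq_div])
  simp only [hinner_ofColumns, map_one, map_zero, map_div₀, map_ofNat, map_mul, Complex.conj_I,
    mul_one, one_mul, mul_zero, zero_mul, add_zero, zero_add, mul_neg, neg_mul] at h₁₁ h₂₂ e₁ e₂
  rw [h₁₁, h₂₂] at e₁ e₂
  have hsum : hinner c₁ c₂ + hinner c₂ c₁ = 0 := by linear_combination 25 / 12 * e₁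
  have hdiff : hinner c₁ c₂ - hinner c₂ c₁ = 0 := by
    linear_combination -25 * .I / 12 * e₂ +
      (hinner c₁ c₂ - hinner c₂ c₁ - 4 * .I / 3) * Complex.I_mul_I
  intro u v
  rw [hinner_ofColumns, h₁₁, h₂₂, show hinner c₁ c₂ = 0 by linear_combination (hsum + hdiff) / 2,
    show hinner c₂ c₁ = 0 by linear_combination (hsum - hdiff) / 2, hinner]
  ring

/-! ### Values of type `♯𝔹 ⇒ ♯𝔹` -/

theorem exists_eval_bsubst_of_span_boolT {x : ℕ} {B w₁ w₂ : Distr}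
    (h₁ : Eval (bsubst x B ttD) w₁) (hw₁ : Span BoolT w₁)
    (h₂ : Eval (bsubst x B ffD) w₂) (hw₂ : Span BoolT w₂) {v : Distr} (hv : Span BoolT v) :
    ∃ w, Eval (bsubst x B v) w ∧ Span BoolT w ∧ piB w = ofColumns (piB w₁) (piB w₂) (piB v) := by
  induction hv with
  | mem hd =>
    rcases mem_BoolT_iff.mp hd with rfl | rfl
    · exact ⟨w₁, h₁, hw₁, by simp⟩
    · exact ⟨w₂, h₂, hw₂, by simp⟩
  | zero => exact ⟨.zero, .refl, .zero, by simp⟩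
  | add _ _ ih₁ ih₂ =>
    obtain ⟨u₁, hE₁, hS₁, hπ₁⟩ := ih₁
    obtain ⟨u₂, hE₂, hS₂, hπ₂⟩ := ih₂
    exact ⟨u₁.add u₂, eval_add hE₁ hE₂, hS₁.add hS₂, by rw [piB_add, piB_add, hπ₁, hπ₂, map_add]⟩
  | smul a _ ih =>
    obtain ⟨u, hE, hS, hπ⟩ := ih
    exact ⟨.smul a u, eval_smul a hE, hS.smul a, by rw [piB_smul, piB_smul, hπ, map_smul]⟩
  | congr _ hc ih =>
    obtain ⟨u, hE, hS, hπ⟩ := ih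
    obtain ⟨u', hE', hc'⟩ := exists_eval_cong_of_cong (hc.bsubst x B) hE
    exact ⟨u', hE', hS.congr hc', by rw [← hc'.piB_eq, hπ, hc.piB_eq]⟩

theorem exists_isUnitaryOp_represents {d : Distr} {x : ℕ}
    (hlam : ∀ t ∈ domD d, ∃ b, t = Term.val (.lam x b))
    (hreal : ∀ v ∈ sharpBool, Realizes sharpBool (bsubst x (stripLam x d) v)) :
    ∃ F, IsUnitaryOp F ∧ Represents d F := by
  obtain ⟨w₁, hw₁, h₁⟩ := hreal ttD ttD_mem_sharpBool
  obtain ⟨w₂, hw₂, h₂⟩ := hreal ffD ffD_mem_sharpBool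
  have hlin {v} := exists_eval_bsubst_of_span_boolT h₁ hw₁.1 h₂ hw₂.1 (v := v)
  refine ⟨ofColumns (piB w₁) (piB w₂), isUnitaryOp_ofColumns fun p hp => ?_, fun v hv => ?_⟩
  · obtain ⟨w, hw, hwS, hπ⟩ := hlin (span_boolT_boolD p)
    obtain ⟨w', hw', he'⟩ := hreal _ (boolD_mem_sharpBool hp)
    have hc := cong_of_eval_val_of_eval_val hw (isValD_of_span_boolT hwS) he'
      (isValD_of_span_boolT hw'.1)
    rw [← piB_boolD p, ← hπ, hc.piB_eq]
    exact (mem_sharpBool_iff.mp hw').2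
  · obtain ⟨w, hw, hwS, hπ⟩ := hlin hv
    obtain ⟨w', hw', hc⟩ :=
      exists_eval_appD_of_eval_bsubst hlam (isValD_of_span_boolT hv) hw
    exact ⟨w', hwS.congr hc, hw', by rw [← hc.piB_eq, hπ]⟩

theorem realizes_sharpBool_of_represents {d : Distr} {x : ℕ}
    (hlam : ∀ t ∈ domD d, ∃ b, t = Term.val (.lam x b)) {F : ℂ × ℂ → ℂ × ℂ}
    (hF : IsUnitaryOp F) (hrep : Represents d F) {v : Distr} (hv : v ∈ sharpBool) :
    Realizes sharpBool (bsubst x (stripLam x d) v) := by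
  obtain ⟨hvS, hvn⟩ := mem_sharpBool_iff.mp hv
  obtain ⟨w, hwS, hw, hπ⟩ := hrep v hvS
  obtain ⟨w', hw', hc⟩ := exists_eval_bsubst_of_eval_appD hlam
    (isValD_of_span_boolT hvS) hw (isValD_of_span_boolT hwS)
  refine ⟨w', mem_sharpBool_iff.mpr ⟨hwS.congr hc, ?_⟩, hw'⟩
  rw [← hc.piB_eq, hπ, hF, hvn]

/-- A unitary distribution of closed abstractions is a value
of type ♯𝔹⇒♯𝔹 iff it represents a unitary operator on ℂ². -/
theorem charac_values_sharpBool_uarrow (d : Distr) (x : ℕ)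
    (hS : d ∈ Sphere)
    (hlam : ∀ t ∈ domD d, ∃ b : Distr, t = Term.val (.lam x b)) :
    d ∈ uarrowT sharpBool sharpBool ↔
      ∃ F : ℂ × ℂ → ℂ × ℂ, IsUnitaryOp F ∧ Represents d F := by
  constructor
  · rintro ⟨-, x', hlam', hreal⟩
    exact exists_isUnitaryOp_represents hlam' hreal
  · rintro ⟨F, hF, hrep⟩
    exact ⟨hS, x, hlam, fun v hv => realizes_sharpBool_of_represents hlam hF hrep hv⟩

end LinAlg
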